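/- The degree-eight invariant of the autonomous d₄P^(II) map is an algebraic combination of the three invariants of its shadow map: for all a, b, c, d, x, y, z, u in ℂ, Δ₈(x, y, z, u) = a·(Σ₃(x, y, z, u)² − 2·Σ₄(x, y, z, u) − Σ₄(x, y, z, u)² − 2·Σ₆(x, y, z, u)) + b·Σ₆(x, y, z, u) + c·Σ₄(x, y, z, u) + d·Σ₃(x, y, z, u). -/
import Mathlib


/-- The degree-eight invariant `Δ₈` of the autonomous `d₄P^(II)` map, in affine coordinates. -/
noncomputable def Δ₈ (a b c d x y z u : ℂ) : ℂ :=
  a * ((u^2 + z^2 + y^2 + x^2)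
        - z^2 * y^2 * (u*z + x*y + y*z)^2
        - (2*y*u*z^2 + 2*u*z*x*y + x^2*z^2 + 2*x*z*y^2 + 2*x^2*y^2 + u^2*y^2
            + 2*z^2*y^2 + 2*u^2*z^2)
        + (2*x^2*y^2*z^2 + 2*u*y^3*z^2 + 2*x*y^2*z^3 + 2*y*u*z^4 + z^2*y^4
            + y^2*z^4 + 2*u^2*y^2*z^2 + x^2*y^4 + 2*u*x*y^3*z + 2*u*x*y*z^3
            + 2*x*z*y^4 + z^4*u^2))
    + b * (1 - z^2) * (1 - y^2) * (z + x) * (u + y)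
    + c * (x*z - z^2*y^2 + y*u - y*u*z^2 - x*z*y^2)
    - d * (x + z - z*y^2 - x*y^2 - u*z^2 + u - y*z^2 + y)

/-- First invariant `Σ₃` of the shadow map `φ_s^(II)`. -/
noncomputable def Sigma₃ (x y z u : ℂ) : ℂ :=
  x*y^2 + z*y^2 + u*z^2 + y*z^2 - (x + y + z + u)

/-- Second invariant `Σ₄` of the shadow map `φ_s^(II)`. -/
noncomputable def Sigma₄ (x y z u : ℂ) : ℂ :=
  z*x + u*y - y*z*(u*z + x*y + y*z)

/-- Third invariant `Σ₆` of the shadow map `φ_s^(II)`. -/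
noncomputable def Sigma₆ (x y z u : ℂ) : ℂ :=
  (1 - z^2) * (1 - y^2) * (z + x) * (u + y)

/-- The degree-eight invariant `Δ₈` of the autonomous `d₄P^(II)` map is an algebraic
combination of the three invariants of its shadow map. -/
theorem d4PII_Delta8_in_terms_of_shadow_invariants (a b c d x y z u : ℂ) :
    Δ₈ a b c d x y z u =
      a * ((Sigma₃ x y z u)^2 - 2 * Sigma₄ x y z u - (Sigma₄ x y z u)^2
            - 2 * Sigma₆ x y z u)
        + b * Sigma₆ x y z u + c * Sigma₄ x y z u + d * Sigma₃ x y z u := by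
  unfold Δ₈ Sigma₃ Sigma₄ Sigma₆; ring
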